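/- Let U, V ⊆ ℝ² be open, let γ : V → U be a C¹ bijection with det(Dγ(s)) > 0 for all s ∈ V, let f : U → ℝ³ be C¹ with g_f(x) invertible for all x ∈ U, and let δf₁, δf₂ : U → ℝ³ be C¹. Fix a, λ, c ∈ ℝ. Define on U: g = g_f, δgᵢ = (Df)ᵀ(D δfᵢ) + (D δfᵢ)ᵀ(Df), n = n_f, and δnᵢ = −½ Tr(g⁻¹δgᵢ) n + (det g)^{−1/2} ( (δfᵢ)ᵤ × fᵥ + fᵤ × (δfᵢ)ᵥ ); define the corresponding quantities g̃, δg̃ᵢ, ñ, δñᵢ on V from f̃ = f∘γ and δf̃ᵢ = δfᵢ∘γ. If the function x ↦ (det g(x))^{1/2} ( a Tr(g⁻¹δg₁ g⁻¹δg₂) + (λ/2) Tr(g⁻¹δg₁) Tr(g⁻¹δg₂) + c δn₁·δn₂ )(x) is Lebesgue integrable on U, then ∫_V (det g̃)^{1/2} ( a Tr(g̃⁻¹δg̃₁ g̃⁻¹δg̃₂) + (λ/2) Tr(g̃⁻¹δg̃₁) Tr(g̃⁻¹δg̃₂) + c δñ₁·δñ₂ ) ds = ∫_U (det g)^{1/2}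 ( a Tr(g⁻¹δg₁ g⁻¹δg₂) + (λ/2) Tr(g⁻¹δg₁) Tr(g⁻¹δg₂) + c δn₁·δn₂ ) dx, i.e. the elastic metric is invariant under orientation-preserving reparameterizations. -/

import Mathlib

open Matrix MeasureTheory

noncomputable section

/-- Partial derivative of a map from ℝ² in direction `i` (image of `eᵢ` under the Fréchet derivative). -/
def pd (f : (Fin 2 → ℝ) → (Fin 3 → ℝ)) (x : Fin 2 → ℝ) (i : Fin 2) : Fin 3 → ℝ :=
  fderiv ℝ f x (Pi.single i 1)

/-- Jacobian matrix of a map ℝ² → ℝ². -/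
def Jmat (γ : (Fin 2 → ℝ) → (Fin 2 → ℝ)) (s : Fin 2 → ℝ) : Matrix (Fin 2) (Fin 2) ℝ :=
  Matrix.of fun i j => fderiv ℝ γ s (Pi.single j 1) i

/-- First fundamental form (Gram matrix of the partial derivatives) of a parameterized surface. -/
def gmat (f : (Fin 2 → ℝ) → (Fin 3 → ℝ)) (x : Fin 2 → ℝ) : Matrix (Fin 2) (Fin 2) ℝ :=
  Matrix.of fun i j => pd f x i ⬝ᵥ pd f x j

/-- Euclidean norm on ℝ³ (as `Fin 3 → ℝ`). -/
def enorm3 (v : Fin 3 → ℝ) : ℝ := Real.sqrt (v ⬝ᵥ v)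

/-- Unit normal vector of a parameterized surface at a point. -/
def unitNormal (f : (Fin 2 → ℝ) → (Fin 3 → ℝ)) (x : Fin 2 → ℝ) : Fin 3 → ℝ :=
  (enorm3 (pd f x 0 ⨯₃ pd f x 1))⁻¹ • (pd f x 0 ⨯₃ pd f x 1)

/-- Variation of the first fundamental form: δg = (Df)ᵀ(Dδf) + (Dδf)ᵀ(Df). -/
def dgmat (f δf : (Fin 2 → ℝ) → (Fin 3 → ℝ)) (x : Fin 2 → ℝ) : Matrix (Fin 2) (Fin 2) ℝ :=
  Matrix.of fun i j => pd f x i ⬝ᵥ pd δf x j + pd δf x i ⬝ᵥ pd f x j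

/-- Variation of the unit normal field:
`δn = −½ Tr(g⁻¹δg) n + (det g)^{−1/2} (δfᵤ × fᵥ + fᵤ × δfᵥ)`. -/
def dnvec (f δf : (Fin 2 → ℝ) → (Fin 3 → ℝ)) (x : Fin 2 → ℝ) : Fin 3 → ℝ :=
  (-(1/2) * ((gmat f x)⁻¹ * dgmat f δf x).trace) • unitNormal f x +
    (Real.sqrt (gmat f x).det)⁻¹ • (pd δf x 0 ⨯₃ pd f x 1 + pd f x 0 ⨯₃ pd δf x 1)

/-- The integrand of the elastic metric
`|g|^{1/2} ( a Tr(g⁻¹δg₁ g⁻¹δg₂) + (λ/2) Tr(g⁻¹δg₁) Tr(g⁻¹δg₂) + c δn₁·δn₂ )`. -/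
def elasticIntegrand (f δf₁ δf₂ : (Fin 2 → ℝ) → (Fin 3 → ℝ)) (a lam c : ℝ)
    (x : Fin 2 → ℝ) : ℝ :=
  Real.sqrt (gmat f x).det *
    (a * ((gmat f x)⁻¹ * dgmat f δf₁ x * ((gmat f x)⁻¹ * dgmat f δf₂ x)).trace +
      lam / 2 * ((gmat f x)⁻¹ * dgmat f δf₁ x).trace * ((gmat f x)⁻¹ * dgmat f δf₂ x).trace +
      c * (dnvec f δf₁ x ⬝ᵥ dnvec f δf₂ x))

/-!
Under a reparameterization `x = γ s` the partial derivatives transform by the Jacobian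
`J = Dγ(s)`, so `g̃ = Jᵀ g J` and `δg̃ᵢ = Jᵀ δgᵢ J`. Hence `g̃⁻¹ δg̃ᵢ = J⁻¹ (g⁻¹ δgᵢ) J` is
conjugate to `g⁻¹ δgᵢ` and every trace in the integrand is unchanged. Cross products of partial
derivatives get multiplied by `det J > 0`, which leaves `n` and `δnᵢ` unchanged and multiplies
`(det g)^{1/2}` by `det J`. So the integrand on `V` is `det J` times the integrand on `U` at `γ s`,
and the change of variables formula gives the equality of the integrals.
-/

section CrossProduct

variable {R : Type*} [CommRing R] (A : Matrix (Fin 2) (Fin 2) R) (u v : Fin 2 → Fin 3 → R)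

lemma cross_lincomb_eq_det_smul :
    (A 0 0 • u 0 + A 1 0 • u 1) ⨯₃ (A 0 1 • u 0 + A 1 1 • u 1) = A.det • (u 0 ⨯₃ u 1) := by
  simp only [det_fin_two, map_add, map_smul, LinearMap.add_apply, LinearMap.smul_apply,
    smul_add]
  rw [← cross_anticomm (u 0) (u 1), cross_self, cross_self]
  module

lemma cross_lincomb_add_cross_lincomb_eq_det_smul :
    (A 0 0 • u 0 + A 1 0 • u 1) ⨯₃ (A 0 1 • v 0 + A 1 1 • v 1)
      + (A 0 0 • v 0 + A 1 0 • v 1) ⨯₃ (A 0 1 • u 0 + A 1 1 • u 1)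
      = A.det • (u 0 ⨯₃ v 1 + v 0 ⨯₃ u 1) := by
  simp only [det_fin_two, map_add, map_smul, LinearMap.add_apply, LinearMap.smul_apply,
    smul_add]
  rw [← cross_anticomm (u 0) (v 0), ← cross_anticomm (u 0) (v 1), ← cross_anticomm (u 1) (v 0),
    ← cross_anticomm (u 1) (v 1)]
  module

end CrossProduct

section MatrixConjugation

variable {n R : Type*} [Fintype n] [DecidableEq n]

lemma inv_transpose_conj_mul_transpose_conj [CommRing R] (J A B : Matrix n n R)
    (hJ : IsUnit J.det) : (Jᵀ * A * J)⁻¹ * (Jᵀ * B * J) = J⁻¹ * (A⁻¹ * B) * J := by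
  rw [Matrix.mul_inv_rev, Matrix.mul_inv_rev, Matrix.mul_assoc, Matrix.mul_assoc, Matrix.mul_assoc,
    Matrix.mul_assoc, nonsing_inv_mul_cancel_left _ _ (isUnit_det_transpose J hJ),
    Matrix.mul_assoc]

lemma sqrt_det_transpose_conj (J A : Matrix n n ℝ) (hJ : 0 ≤ J.det) :
    √(Jᵀ * A * J).det = J.det * √A.det := by
  rw [det_mul, det_mul, det_transpose, mul_comm _ J.det, ← mul_assoc, ← sq,
    Real.sqrt_mul (sq_nonneg _), Real.sqrt_sq hJ]

end MatrixConjugation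

lemma enorm3_smul (c : ℝ) (w : Fin 3 → ℝ) : enorm3 (c • w) = |c| * enorm3 w := by
  rw [enorm3, enorm3, smul_dotProduct, dotProduct_smul, smul_smul, smul_eq_mul, ← sq,
    Real.sqrt_mul (sq_nonneg c), Real.sqrt_sq_eq_abs]

lemma fderiv_apply_eq_pd (f : (Fin 2 → ℝ) → (Fin 3 → ℝ)) (x v : Fin 2 → ℝ) :
    fderiv ℝ f x v = v 0 • pd f x 0 + v 1 • pd f x 1 := by
  have hv : v = v 0 • (Pi.single 0 1 : Fin 2 → ℝ) + v 1 • (Pi.single 1 1 : Fin 2 → ℝ) := by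
    funext k; fin_cases k <;> simp
  conv_lhs => rw [hv]
  rw [map_add, map_smul, map_smul, pd, pd]

lemma det_Jmat (γ : (Fin 2 → ℝ) → (Fin 2 → ℝ)) (s : Fin 2 → ℝ) :
    (Jmat γ s).det = (fderiv ℝ γ s).det := by
  have : Jmat γ s = LinearMap.toMatrix (Pi.basisFun ℝ (Fin 2)) (Pi.basisFun ℝ (Fin 2))
      (fderiv ℝ γ s : (Fin 2 → ℝ) →ₗ[ℝ] (Fin 2 → ℝ)) := by
    ext i j
    simp [Jmat]
  rw [this, LinearMap.det_toMatrix]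

section Reparameterization

variable {γ : (Fin 2 → ℝ) → (Fin 2 → ℝ)} {f δf : (Fin 2 → ℝ) → (Fin 3 → ℝ)} {s : Fin 2 → ℝ}

lemma pd_comp (hγ : DifferentiableAt ℝ γ s) (hf : DifferentiableAt ℝ f (γ s)) (i : Fin 2) :
    pd (f ∘ γ) s i = Jmat γ s 0 i • pd f (γ s) 0 + Jmat γ s 1 i • pd f (γ s) 1 := by
  rw [pd, fderiv_comp s hf hγ, ContinuousLinearMap.comp_apply, fderiv_apply_eq_pd]
  rfl

lemma gmat_comp (hγ : DifferentiableAt ℝ γ s) (hf : DifferentiableAt ℝ f (γ s)) :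
    gmat (f ∘ γ) s = (Jmat γ s)ᵀ * gmat f (γ s) * Jmat γ s := by
  ext i j
  simp only [gmat, of_apply, pd_comp hγ hf, mul_apply, Fin.sum_univ_two, transpose_apply,
    dotProduct, Fin.sum_univ_three, Pi.add_apply, Pi.smul_apply, smul_eq_mul]
  ring

lemma dgmat_comp (hγ : DifferentiableAt ℝ γ s) (hf : DifferentiableAt ℝ f (γ s))
    (hδf : DifferentiableAt ℝ δf (γ s)) :
    dgmat (f ∘ γ) (δf ∘ γ) s = (Jmat γ s)ᵀ * dgmat f δf (γ s) * Jmat γ s := by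
  ext i j
  simp only [dgmat, of_apply, pd_comp hγ hf, pd_comp hγ hδf, mul_apply, Fin.sum_univ_two,
    transpose_apply, dotProduct, Fin.sum_univ_three, Pi.add_apply, Pi.smul_apply, smul_eq_mul]
  ring

lemma inv_gmat_mul_dgmat_comp (hγ : DifferentiableAt ℝ γ s) (hf : DifferentiableAt ℝ f (γ s))
    (hδf : DifferentiableAt ℝ δf (γ s)) (hJ : IsUnit (Jmat γ s).det) :
    (gmat (f ∘ γ) s)⁻¹ * dgmat (f ∘ γ) (δf ∘ γ) s
      = (Jmat γ s)⁻¹ * ((gmat f (γ s))⁻¹ * dgmat f δf (γ s)) * Jmat γ s := by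
  rw [gmat_comp hγ hf, dgmat_comp hγ hf hδf, inv_transpose_conj_mul_transpose_conj _ _ _ hJ]

lemma sqrt_det_gmat_comp (hγ : DifferentiableAt ℝ γ s) (hf : DifferentiableAt ℝ f (γ s))
    (hJ : 0 < (Jmat γ s).det) :
    √(gmat (f ∘ γ) s).det = (Jmat γ s).det * √(gmat f (γ s)).det := by
  rw [gmat_comp hγ hf, sqrt_det_transpose_conj _ _ hJ.le]

lemma unitNormal_comp (hγ : DifferentiableAt ℝ γ s) (hf : DifferentiableAt ℝ f (γ s))
    (hJ : 0 < (Jmat γ s).det) :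
    unitNormal (f ∘ γ) s = unitNormal f (γ s) := by
  have hcross : pd (f ∘ γ) s 0 ⨯₃ pd (f ∘ γ) s 1
      = (Jmat γ s).det • (pd f (γ s) 0 ⨯₃ pd f (γ s) 1) := by
    rw [pd_comp hγ hf, pd_comp hγ hf]
    exact cross_lincomb_eq_det_smul _ _
  rw [unitNormal, hcross, enorm3_smul, abs_of_pos hJ, unitNormal, smul_smul, mul_inv,
    mul_right_comm, inv_mul_cancel₀ hJ.ne', one_mul]

lemma dnvec_comp (hγ : DifferentiableAt ℝ γ s) (hf : DifferentiableAt ℝ f (γ s))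
    (hδf : DifferentiableAt ℝ δf (γ s)) (hJ : 0 < (Jmat γ s).det) :
    dnvec (f ∘ γ) (δf ∘ γ) s = dnvec f δf (γ s) := by
  have hcross : pd (δf ∘ γ) s 0 ⨯₃ pd (f ∘ γ) s 1 + pd (f ∘ γ) s 0 ⨯₃ pd (δf ∘ γ) s 1
      = (Jmat γ s).det • (pd δf (γ s) 0 ⨯₃ pd f (γ s) 1 + pd f (γ s) 0 ⨯₃ pd δf (γ s) 1) := by
    rw [pd_comp hγ hf, pd_comp hγ hf, pd_comp hγ hδf, pd_comp hγ hδf]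
    exact cross_lincomb_add_cross_lincomb_eq_det_smul _ _ _
  have hJu : IsUnit (Jmat γ s) := (isUnit_iff_isUnit_det _).2 hJ.ne'.isUnit
  rw [dnvec, dnvec, inv_gmat_mul_dgmat_comp hγ hf hδf hJ.ne'.isUnit, trace_conj' hJu,
    unitNormal_comp hγ hf hJ, hcross, sqrt_det_gmat_comp hγ hf hJ, smul_smul, mul_inv,
    mul_right_comm, inv_mul_cancel₀ hJ.ne', one_mul]

lemma elasticIntegrand_comp {δf₁ δf₂ : (Fin 2 → ℝ) → (Fin 3 → ℝ)} (a lam c : ℝ)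
    (hγ : DifferentiableAt ℝ γ s) (hf : DifferentiableAt ℝ f (γ s))
    (h1 : DifferentiableAt ℝ δf₁ (γ s)) (h2 : DifferentiableAt ℝ δf₂ (γ s))
    (hJ : 0 < (Jmat γ s).det) :
    elasticIntegrand (f ∘ γ) (δf₁ ∘ γ) (δf₂ ∘ γ) a lam c s
      = (Jmat γ s).det * elasticIntegrand f δf₁ δf₂ a lam c (γ s) := by
  have hJu : IsUnit (Jmat γ s) := (isUnit_iff_isUnit_det _).2 hJ.ne'.isUnit
  have hconj_mul : ∀ M N : Matrix (Fin 2) (Fin 2) ℝ,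
      (Jmat γ s)⁻¹ * M * Jmat γ s * ((Jmat γ s)⁻¹ * N * Jmat γ s)
        = (Jmat γ s)⁻¹ * (M * N) * Jmat γ s := fun M N => by
    simp only [Matrix.mul_assoc, mul_nonsing_inv_cancel_left _ _ hJ.ne'.isUnit]
  rw [elasticIntegrand, elasticIntegrand, inv_gmat_mul_dgmat_comp hγ hf h1 hJ.ne'.isUnit,
    inv_gmat_mul_dgmat_comp hγ hf h2 hJ.ne'.isUnit, hconj_mul, trace_conj' hJu,
    trace_conj' hJu, trace_conj' hJu, dnvec_comp hγ hf h1 hJ, dnvec_comp hγ hf h2 hJ,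
    sqrt_det_gmat_comp hγ hf hJ]
  ring

end Reparameterization

theorem stmt5_general (U V : Set (Fin 2 → ℝ)) (hU : IsOpen U) (hV : IsOpen V)
    (γ : (Fin 2 → ℝ) → (Fin 2 → ℝ)) (f δf₁ δf₂ : (Fin 2 → ℝ) → (Fin 3 → ℝ))
    (a lam c : ℝ)
    (hγ : ContDiffOn ℝ 1 γ V) (hbij : Set.BijOn γ V U)
    (hdet : ∀ s ∈ V, 0 < (Jmat γ s).det)
    (hf : ContDiffOn ℝ 1 f U)
    (h1 : ContDiffOn ℝ 1 δf₁ U) (h2 : ContDiffOn ℝ 1 δf₂ U) :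
    ∫ s in V, elasticIntegrand (f ∘ γ) (δf₁ ∘ γ) (δf₂ ∘ γ) a lam c s
      = ∫ x in U, elasticIntegrand f δf₁ δf₂ a lam c x := by
  have hγd : ∀ s ∈ V, DifferentiableAt ℝ γ s := fun s hs =>
    (hγ.differentiableOn one_ne_zero).differentiableAt (hV.mem_nhds hs)
  have hUd : ∀ {h : (Fin 2 → ℝ) → (Fin 3 → ℝ)}, ContDiffOn ℝ 1 h U →
      ∀ s ∈ V, DifferentiableAt ℝ h (γ s) := fun hh s hs =>
    (hh.differentiableOn one_ne_zero).differentiableAt (hU.mem_nhds (hbij.mapsTo hs))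
  rw [← hbij.image_eq, integral_image_eq_integral_abs_det_fderiv_smul volume hV.measurableSet
    (fun s hs => (hγd s hs).hasFDerivAt.hasFDerivWithinAt) hbij.injOn]
  refine setIntegral_congr_fun hV.measurableSet fun s hs => ?_
  rw [elasticIntegrand_comp a lam c (hγd s hs) (hUd hf s hs) (hUd h1 s hs) (hUd h2 s hs)
    (hdet s hs), smul_eq_mul, ← det_Jmat, abs_of_pos (hdet s hs)]

theorem stmt5 (U V : Set (Fin 2 → ℝ)) (hU : IsOpen U) (hV : IsOpen V)
    (γ : (Fin 2 → ℝ) → (Fin 2 → ℝ)) (f δf₁ δf₂ : (Fin 2 → ℝ) → (Fin 3 → ℝ))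
    (a lam c : ℝ)
    (hγ : ContDiffOn ℝ 1 γ V) (hbij : Set.BijOn γ V U)
    (hdet : ∀ s ∈ V, 0 < (Jmat γ s).det)
    (hf : ContDiffOn ℝ 1 f U) (hg : ∀ x ∈ U, IsUnit (gmat f x))
    (h1 : ContDiffOn ℝ 1 δf₁ U) (h2 : ContDiffOn ℝ 1 δf₂ U)
    (hint : IntegrableOn (elasticIntegrand f δf₁ δf₂ a lam c) U) :
    ∫ s in V, elasticIntegrand (f ∘ γ) (δf₁ ∘ γ) (δf₂ ∘ γ) a lam c s
      = ∫ x in U, elasticIntegrand f δf₁ δf₂ a lam c x :=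
  stmt5_general U V hU hV γ f δf₁ δf₂ a lam c hγ hbij hdet hf h1 h2
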